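/- (Formula (3.44) for d=1; divergent beam transform asymptotics of the Green function.) Let φ : ℝ → ℂ be a smooth compactly supported function, let y ∈ ℝ and θ ∈ {−1, 1}. Then there exist C > 0 and κ₀ > 0 such that for all κ ≥ κ₀, |∫_ℝ g⁺(x − y, κθ) φ(x) dx − (2iκ)^{-1} ∫_0^∞ φ(y + tθ) dt| ≤ C κ^{−2}, where g⁺(x, k) = e^{iκ|x| − ikx}/(2iκ) for x ∈ ℝ, k = κθ. -/

import Mathlib

open Complex MeasureTheory

noncomputable section

lemma osc_bound (ψ : ℝ → ℂ) (hψ : ContDiff ℝ (⊤ : ℕ∞) ψ) (hs : HasCompactSupport ψ)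
    (κ : ℝ) (hκ : 0 < κ) :
    ‖∫ s in Set.Ioi (0:ℝ), Complex.exp (2 * Complex.I * κ * s) * ψ s‖ ≤
      (‖ψ 0‖ + ∫ s in Set.Ioi (0:ℝ), ‖deriv ψ s‖) / (2 * κ) := by
  set c : ℂ := 2 * Complex.I * κ with hc_def
  have hc : c ≠ 0 := by
    simp only [hc_def]
    exact mul_ne_zero (mul_ne_zero two_ne_zero I_ne_zero) (by exact_mod_cast hκ.ne')
  have hcnorm : ‖c‖ = 2 * κ := by
    simp [hc_def, Complex.norm_real, abs_of_pos hκ]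
  have hexp : ∀ s : ℝ, ‖Complex.exp (c * s)‖ = 1 := by
    intro s
    rw [Complex.norm_exp]
    have : (c * s).re = 0 := by simp [hc_def]
    rw [this, Real.exp_zero]
  -- the exponential as a contDiff function
  have h1 : ContDiff ℝ (⊤ : ℕ∞) (fun s : ℝ => Complex.exp (c * s)) := by
    have ha : ContDiff ℝ (⊤ : ℕ∞) (fun s : ℝ => c * (s : ℂ)) :=
      contDiff_const.mul (Complex.ofRealCLM.contDiff (n := (⊤ : ℕ∞)))
    exact ha.cexp
  set F : ℝ → ℂ := fun s => Complex.exp (c * s) * ψ s / c with hF_def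
  have hFc : ContDiff ℝ (⊤ : ℕ∞) F := (h1.mul hψ).div_const c
  have hFs : HasCompactSupport F := by
    apply HasCompactSupport.intro' (hs.isCompact) (isClosed_tsupport ψ)
    intro x hx
    have : ψ x = 0 := image_eq_zero_of_notMem_tsupport hx
    simp [hF_def, this]
  have hψd : Differentiable ℝ ψ := hψ.differentiable (by simp)
  have hderiv : ∀ s : ℝ, deriv F s =
      Complex.exp (c * s) * ψ s + Complex.exp (c * s) * deriv ψ s / c := by
    intro s
    have he : HasDerivAt (fun s : ℝ => Complex.exp (c * s)) (Complex.exp (c * s) * c) s := by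
      have h0 : HasDerivAt (fun s : ℝ => c * (s : ℂ)) c s := by
        simpa using (Complex.ofRealCLM.hasDerivAt (x := s)).const_mul c
      simpa using h0.cexp
    have hF : HasDerivAt F ((Complex.exp (c * s) * c * ψ s
        + Complex.exp (c * s) * deriv ψ s) / c) s :=
      (he.mul (hψd s).hasDerivAt).div_const c
    rw [hF.deriv]
    field_simp
  have ib := hFs.integral_Ioi_deriv_eq (hFc.of_le (by simp)) 0
  have intψ : IntegrableOn (fun s : ℝ => Complex.exp (c * s) * ψ s) (Set.Ioi (0:ℝ)) := by
    exact ((hψ.continuous.integrable_of_hasCompactSupport hs).bdd_mul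
      (Complex.continuous_exp.comp (continuous_const.mul Complex.continuous_ofReal)).aestronglyMeasurable
      (Filter.Eventually.of_forall fun s => (hexp s).le)).integrableOn
  have intψ' : IntegrableOn (fun s : ℝ => Complex.exp (c * s) * deriv ψ s / c) (Set.Ioi (0:ℝ)) := by
    exact ((((hψ.continuous_deriv (by simp)).integrable_of_hasCompactSupport hs.deriv).bdd_mul
      (Complex.continuous_exp.comp (continuous_const.mul Complex.continuous_ofReal)).aestronglyMeasurable
      (Filter.Eventually.of_forall fun s => (hexp s).le)).div_const c).integrableOn
  rw [MeasureTheory.setIntegral_congr_fun measurableSet_Ioi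
    (fun s _ => hderiv s), MeasureTheory.integral_add intψ intψ'] at ib
  have key : (∫ s in Set.Ioi (0:ℝ), Complex.exp (c * s) * ψ s)
      = - F 0 - ∫ s in Set.Ioi (0:ℝ), Complex.exp (c * s) * deriv ψ s / c := by
    linear_combination ib
  rw [key]
  have hF0 : ‖F 0‖ = ‖ψ 0‖ / (2 * κ) := by
    simp [hF_def, norm_div, hcnorm]
  have hbound2 : ‖∫ s in Set.Ioi (0:ℝ), Complex.exp (c * s) * deriv ψ s / c‖ ≤
      (∫ s in Set.Ioi (0:ℝ), ‖deriv ψ s‖) / (2 * κ) := by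
    calc ‖∫ s in Set.Ioi (0:ℝ), Complex.exp (c * s) * deriv ψ s / c‖
        ≤ ∫ s in Set.Ioi (0:ℝ), ‖Complex.exp (c * s) * deriv ψ s / c‖ :=
          norm_integral_le_integral_norm _
      _ = ∫ s in Set.Ioi (0:ℝ), ‖deriv ψ s‖ / (2 * κ) := by
          refine MeasureTheory.setIntegral_congr_fun measurableSet_Ioi (fun s _ => ?_)
          rw [norm_div, norm_mul, hexp, hcnorm, one_mul]
      _ = (∫ s in Set.Ioi (0:ℝ), ‖deriv ψ s‖) / (2 * κ) := by
          rw [MeasureTheory.integral_div]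
  calc ‖- F 0 - ∫ s in Set.Ioi (0:ℝ), Complex.exp (c * s) * deriv ψ s / c‖
      ≤ ‖F 0‖ + ‖∫ s in Set.Ioi (0:ℝ), Complex.exp (c * s) * deriv ψ s / c‖ := by
        simpa using norm_sub_le (-F 0) _
    _ ≤ ‖ψ 0‖ / (2 * κ) + (∫ s in Set.Ioi (0:ℝ), ‖deriv ψ s‖) / (2 * κ) := by
        rw [hF0]; exact add_le_add le_rfl hbound2
    _ = (‖ψ 0‖ + ∫ s in Set.Ioi (0:ℝ), ‖deriv ψ s‖) / (2 * κ) := by ring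

/-- Formula (3.44) for d = 1: divergent beam transform asymptotics of the Green function.
Here `g⁺(x, k) = e^{iκ|x| - ikx}/(2iκ)` with `k = κθ`, and the divergent beam transform
of `φ` is `Dφ(y, θ) = ∫_0^∞ φ(y + tθ) dt`. -/
theorem stmt13 (φ : ℝ → ℂ) (hφ : ContDiff ℝ (⊤ : ℕ∞) φ) (hsupp : HasCompactSupport φ)
    (y θ : ℝ) (hθ : θ = 1 ∨ θ = -1) :
    ∃ C > (0 : ℝ), ∃ κ₀ > (0 : ℝ), ∀ κ ≥ κ₀,
      ‖(∫ x : ℝ, Complex.exp (Complex.I * (κ * |x - y| - κ * θ * (x - y))) /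
            (2 * Complex.I * κ) * φ x) -
        (2 * Complex.I * κ)⁻¹ * ∫ t in Set.Ioi (0 : ℝ), φ (y + t * θ)‖ ≤ C / κ ^ 2 := by
  have hθ0 : θ ≠ 0 := by rcases hθ with rfl | rfl <;> norm_num
  have hθ2 : θ * θ = 1 := by rcases hθ with rfl | rfl <;> norm_num
  have hθabs : |θ| = 1 := by rcases hθ with rfl | rfl <;> norm_num
  have hθ2C : (θ : ℂ) * (θ : ℂ) = 1 := by exact_mod_cast congrArg (Complex.ofReal) hθ2
  -- the reflected function ψ
  set ψ : ℝ → ℂ := fun s => φ (y - θ * s) with hψ_def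
  have hψc : ContDiff ℝ (⊤ : ℕ∞) ψ :=
    hφ.comp (contDiff_const.sub (contDiff_const.mul contDiff_id))
  have e1 : ℝ ≃ₜ ℝ := (Homeomorph.mulLeft₀ θ hθ0).trans (Homeomorph.subLeft y)
  have hψs : HasCompactSupport ψ := by
    exact hsupp.comp_homeomorph ((Homeomorph.mulLeft₀ θ hθ0).trans (Homeomorph.subLeft y))
  set M : ℝ := ‖ψ 0‖ + ∫ s in Set.Ioi (0:ℝ), ‖deriv ψ s‖ with hM_def
  have hM : 0 ≤ M := add_nonneg (norm_nonneg _) (integral_nonneg (fun s => norm_nonneg _))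
  refine ⟨M / 4 + 1, by positivity, 1, one_pos, fun κ hκ => ?_⟩
  have hκ0 : (0:ℝ) < κ := lt_of_lt_of_le one_pos hκ
  set c : ℂ := 2 * Complex.I * κ with hc_def
  have hc : c ≠ 0 :=
    mul_ne_zero (mul_ne_zero two_ne_zero I_ne_zero) (by exact_mod_cast hκ0.ne')
  have hcnorm : ‖c‖ = 2 * κ := by
    simp [hc_def, Complex.norm_real, abs_of_pos hκ0]
  set f : ℝ → ℂ := fun x => Complex.exp (Complex.I * (κ * |x - y| - κ * θ * (x - y))) /
      (2 * Complex.I * κ) * φ x with hf_def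
  set g : ℝ → ℂ := fun u => Complex.exp (Complex.I * ((κ:ℂ) * |u| - (κ:ℂ) * u)) / c *
      φ (y + θ * u) with hg_def
  -- pointwise substitution identity
  have hfg : ∀ u : ℝ, f (y + θ * u) = g u := by
    intro u
    have habs : |y + θ * u - y| = |u| := by
      rw [show y + θ * u - y = θ * u by ring, abs_mul, hθabs, one_mul]
    simp only [hf_def, hg_def, habs]
    have h1 : ((y + θ * u : ℝ) : ℂ) - (y : ℂ) = (θ : ℂ) * u := by push_cast; ring
    rw [h1, show (κ:ℂ) * (θ:ℂ) * ((θ:ℂ) * (u:ℂ)) = (κ:ℂ) * (u:ℂ) by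
      linear_combination ((κ:ℂ) * (u:ℂ)) * hθ2C]
  -- change of variables on the whole line
  have step1 : (∫ x : ℝ, f x) = ∫ u : ℝ, g u := by
    have h2 : (∫ u : ℝ, f (y + θ * u)) = |θ⁻¹| • ∫ v : ℝ, f (y + v) :=
      MeasureTheory.Measure.integral_comp_mul_left (fun v => f (y + v)) θ
    have h3 : (∫ v : ℝ, f (y + v)) = ∫ x : ℝ, f x :=
      MeasureTheory.integral_add_left_eq_self f y
    calc (∫ x : ℝ, f x) = ∫ u : ℝ, f (y + θ * u) := by
          rw [h2, h3, abs_inv, hθabs]; norm_num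
      _ = ∫ u : ℝ, g u := by simp_rw [hfg]
  -- integrability of g
  have hφcomp : Continuous (fun u : ℝ => φ (y + θ * u)) :=
    hφ.continuous.comp (by continuity)
  have hφcomps : HasCompactSupport (fun u : ℝ => φ (y + θ * u)) := by
    have := hsupp.comp_homeomorph ((Homeomorph.mulLeft₀ θ hθ0).trans (Homeomorph.addLeft y))
    exact this
  have hbd : ∀ u : ℝ, ‖Complex.exp (Complex.I * ((κ:ℂ) * |u| - (κ:ℂ) * u)) / c‖ ≤ (2*κ)⁻¹ := by
    intro u
    rw [norm_div, hcnorm, Complex.norm_exp]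
    have : (Complex.I * ((κ:ℂ) * |u| - (κ:ℂ) * u)).re = 0 := by simp
    rw [this, Real.exp_zero, one_div]
  have hint : Integrable g := by
    apply (hφcomp.integrable_of_hasCompactSupport hφcomps).bdd_mul
    · exact ((Complex.continuous_exp.comp (by continuity)).div_const c).aestronglyMeasurable
    · exact Filter.Eventually.of_forall hbd
  -- split the integral
  have step2 : (∫ u : ℝ, g u) =
      (∫ u in Set.Iio (0:ℝ), g u) + ∫ u in Set.Ici (0:ℝ), g u :=
    (intervalIntegral.integral_Iio_add_Ici hint.integrableOn hint.integrableOn).symm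
  -- the nonoscillatory half
  have step3 : (∫ u in Set.Ici (0:ℝ), g u) = c⁻¹ * ∫ t in Set.Ioi (0:ℝ), φ (y + t * θ) := by
    rw [MeasureTheory.integral_Ici_eq_integral_Ioi]
    rw [MeasureTheory.setIntegral_congr_fun measurableSet_Ioi
      (show Set.EqOn g (fun u => c⁻¹ * φ (y + u * θ)) (Set.Ioi 0) by
        intro u hu
        have habs : |u| = u := abs_of_pos hu
        simp only [hg_def, habs]
        rw [sub_self, mul_zero, Complex.exp_zero, mul_comm θ u]
        ring)]
    rw [MeasureTheory.integral_const_mul]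
  -- the oscillatory half
  have step4 : (∫ u in Set.Iio (0:ℝ), g u) =
      c⁻¹ * ∫ s in Set.Ioi (0:ℝ), Complex.exp (2 * Complex.I * κ * s) * ψ s := by
    have h5 : (∫ s in Set.Ioi (0:ℝ), g (-s)) = ∫ u in Set.Iio (0:ℝ), g u := by
      rw [integral_comp_neg_Ioi, neg_zero,
        MeasureTheory.integral_Iic_eq_integral_Iio]
    rw [← h5]
    rw [MeasureTheory.setIntegral_congr_fun measurableSet_Ioi
      (show Set.EqOn (fun s => g (-s))
        (fun s => c⁻¹ * (Complex.exp (2 * Complex.I * κ * s) * ψ s)) (Set.Ioi 0) by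
        intro s hs
        have habs : |(-s : ℝ)| = s := by rw [abs_neg, abs_of_pos hs]
        simp only [hg_def, hψ_def, habs]
        rw [show y + θ * (-s) = y - θ * s by ring]
        rw [show Complex.I * ((κ:ℂ) * s - (κ:ℂ) * (-s:ℝ)) = 2 * Complex.I * κ * s by
          push_cast; ring]
        ring)]
    rw [MeasureTheory.integral_const_mul]
  -- assemble
  have key : (∫ x : ℝ, f x) - c⁻¹ * (∫ t in Set.Ioi (0:ℝ), φ (y + t * θ)) =
      c⁻¹ * ∫ s in Set.Ioi (0:ℝ), Complex.exp (2 * Complex.I * κ * s) * ψ s := by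
    rw [step1, step2, step3, step4]; ring
  calc ‖(∫ x : ℝ, f x) - c⁻¹ * ∫ t in Set.Ioi (0:ℝ), φ (y + t * θ)‖
      = ‖c⁻¹‖ * ‖∫ s in Set.Ioi (0:ℝ), Complex.exp (2 * Complex.I * κ * s) * ψ s‖ := by
        rw [key, norm_mul]
    _ ≤ (2*κ)⁻¹ * (M / (2 * κ)) := by
        apply mul_le_mul _ (osc_bound ψ hψc hψs κ hκ0) (norm_nonneg _) (by positivity)
        rw [norm_inv, hcnorm]
    _ ≤ (M / 4 + 1) / κ ^ 2 := by
        rw [show (2*κ)⁻¹ * (M / (2 * κ)) = (M/4) / κ^2 by field_simp; ring_nf]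
        gcongr
        linarith
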